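/- Let M ⊆ ℤ^m be an affine monoid and F a face of cone(M). Then the quotient K[M]/p_F is isomorphic as a K-algebra to K[M ∩ F], where p_F is the ideal spanned by monomials X^a with a ∈ M \ F. Moreover the natural inclusion K[M ∩ F] → K[M] is split by the face projection sending X^a to X^a if a ∈ F and to 0 otherwise. -/

import Mathlib

/-!
Since `M ∩ F` is a face of `M`, a sum of two elements of `M` lies in `F` exactly when both
summands do. Hence sending `X^a` to `X^a` for `a ∈ F` and to `0` otherwise is multiplicative,
and it retracts the inclusion `K[M ∩ F] → K[M]`. For every `x`, the difference `x - ι (π x)` is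
a combination of monomials `X^a` with `a ∉ F`, so the kernel of `π` is `p_F`.
-/

noncomputable section

/-- The canonical embedding `ℤ^m → ℝ^m`. -/
def toR {m : ℕ} (x : Fin m → ℤ) : Fin m → ℝ := fun i => (x i : ℝ)

/-- The subgroup of `ℤ^m` generated by a submonoid `M`. -/
def gp {m : ℕ} (M : AddSubmonoid (Fin m → ℤ)) : AddSubgroup (Fin m → ℤ) :=
  AddSubgroup.closure (M : Set (Fin m → ℤ))

/-- The convex cone in `ℝ^m` generated by `M`: all nonnegative real combinations
of elements of `M`. -/
def coneM {m : ℕ} (M : AddSubmonoid (Fin m → ℤ)) : Set (Fin m → ℝ) :=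
  {x | ∃ (n : ℕ) (c : Fin n → ℝ) (v : Fin n → (Fin m → ℤ)),
    (∀ i, 0 ≤ c i) ∧ (∀ i, v i ∈ M) ∧ x = ∑ i, c i • toR (v i)}

/-- Faces of `coneM M`: the cone itself, or an intersection with a supporting
hyperplane given by a linear form nonnegative on the cone. -/
def IsFace {m : ℕ} (M : AddSubmonoid (Fin m → ℤ)) (F : Set (Fin m → ℝ)) : Prop :=
  F = coneM M ∨ ∃ α : (Fin m → ℝ) →ₗ[ℝ] ℝ,
    (∀ x ∈ coneM M, 0 ≤ α x) ∧ F = {x ∈ coneM M | α x = 0}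

/-- A facet: a maximal proper face. -/
def IsFacet {m : ℕ} (M : AddSubmonoid (Fin m → ℤ)) (F : Set (Fin m → ℝ)) : Prop :=
  IsFace M F ∧ F ≠ coneM M ∧ ∀ G, IsFace M G → F ⊆ G → G = F ∨ G = coneM M

/-- The subgroup `gp(M ∩ F)` of `ℤ^m` generated by the elements of `M` lying
in the face `F`. -/
def gpF {m : ℕ} (M : AddSubmonoid (Fin m → ℤ)) (F : Set (Fin m → ℝ)) :
    AddSubgroup (Fin m → ℤ) :=
  AddSubgroup.closure {a : Fin m → ℤ | a ∈ M ∧ toR a ∈ F}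

/-- `M` is seminormal: `z ∈ gp(M)`, `2z ∈ M`, `3z ∈ M` imply `z ∈ M`. -/
def Seminormal {m : ℕ} (M : AddSubmonoid (Fin m → ℤ)) : Prop :=
  ∀ z ∈ gp M, 2 • z ∈ M → 3 • z ∈ M → z ∈ M

/-- `M` is normal: `z ∈ gp(M)`, `kz ∈ M` for some `k ≥ 1` imply `z ∈ M`. -/
def IsNormal {m : ℕ} (M : AddSubmonoid (Fin m → ℤ)) : Prop :=
  ∀ z ∈ gp M, (∃ k : ℕ, 0 < k ∧ k • z ∈ M) → z ∈ M

/-- `M` is positive: `0` is the only invertible element. -/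
def Positive {m : ℕ} (M : AddSubmonoid (Fin m → ℤ)) : Prop :=
  ∀ a ∈ M, -a ∈ M → a = 0

/-- The localization monoid `M_F` of `M` at a face `F`:
elements `a ∈ gp(M)` with `a + b ∈ M` for some `b ∈ M ∩ F`. -/
def locM {m : ℕ} (M : AddSubmonoid (Fin m → ℤ)) (F : Set (Fin m → ℝ)) :
    Set (Fin m → ℤ) :=
  {a | a ∈ gp M ∧ ∃ b, b ∈ M ∧ toR b ∈ F ∧ a + b ∈ M}

/-- For a subset `F ⊆ ℝ^m`, the ideal `p_F` of `K[M]` generated by the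
monomials `X^a` with `a ∈ M`, `a ∉ F`. -/
def pIdeal {m : ℕ} (K : Type*) [Field K] (M : AddSubmonoid (Fin m → ℤ))
    (F : Set (Fin m → ℝ)) : Ideal (AddMonoidAlgebra K ↥M) :=
  Ideal.span {x | ∃ a : ↥M, toR (a : Fin m → ℤ) ∉ F ∧
    x = AddMonoidAlgebra.single a (1 : K)}

namespace AddSubmonoid

variable {G : Type*} [AddCommMonoid G]

structure IsFaceOf (N M : AddSubmonoid G) : Prop where
  le : N ≤ M
  left_mem_of_add_mem : ∀ ⦃a b : G⦄, a ∈ M → b ∈ M → a + b ∈ N → a ∈ N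

theorem IsFaceOf.right_mem_of_add_mem {N M : AddSubmonoid G} (hN : N.IsFaceOf M) ⦃a b : G⦄
    (ha : a ∈ M) (hb : b ∈ M) (hab : a + b ∈ N) : b ∈ N :=
  hN.left_mem_of_add_mem hb ha (add_comm a b ▸ hab)

end AddSubmonoid

namespace AddMonoidAlgebra

variable {G : Type*} [AddCommMonoid G] {M N : AddSubmonoid G} {R : Type*}

section CommSemiring

variable [CommSemiring R]

variable (R) in
open Classical in
def faceProjectionMonoidHom (hN : N.IsFaceOf M) : Multiplicative M →* AddMonoidAlgebra R N where
  toFun a := if h : (a.toAdd : G) ∈ N then single ⟨a.toAdd, h⟩ 1 else 0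
  map_one' := by simp [N.zero_mem]; rfl
  map_mul' a b := by
    by_cases hab : ((a.toAdd + b.toAdd : M) : G) ∈ N
    · have ha := hN.left_mem_of_add_mem a.toAdd.2 b.toAdd.2 hab
      have hb := hN.right_mem_of_add_mem a.toAdd.2 b.toAdd.2 hab
      simp only [toAdd_mul, dif_pos hab, dif_pos ha, dif_pos hb, single_mul_single, mul_one]
      rfl
    · obtain ha | hb : (a.toAdd : G) ∉ N ∨ (b.toAdd : G) ∉ N :=
        not_and_or.1 fun h => hab (N.add_mem h.1 h.2)
      · simp only [toAdd_mul, dif_neg hab, dif_neg ha, zero_mul]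
      · simp only [toAdd_mul, dif_neg hab, dif_neg hb, mul_zero]

variable (R) in
def faceProjection (hN : N.IsFaceOf M) : AddMonoidAlgebra R M →ₐ[R] AddMonoidAlgebra R N :=
  lift R _ M (faceProjectionMonoidHom R hN)

theorem faceProjection_single_of_mem (hN : N.IsFaceOf M) (a : M) (h : (a : G) ∈ N) (r : R) :
    faceProjection R hN (single a r) = single ⟨a, h⟩ r := by
  simp [faceProjection, faceProjectionMonoidHom, h]

theorem faceProjection_single_of_not_mem (hN : N.IsFaceOf M) (a : M) (h : (a : G) ∉ N) (r : R) :
    faceProjection R hN (single a r) = 0 := by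
  simp [faceProjection, faceProjectionMonoidHom, h]

variable (R) in
def faceInclusion (hN : N.IsFaceOf M) : AddMonoidAlgebra R N →ₐ[R] AddMonoidAlgebra R M :=
  mapDomainAlgHom R R (AddSubmonoid.inclusion hN.le)

theorem faceInclusion_single (hN : N.IsFaceOf M) (b : N) (r : R) :
    faceInclusion R hN (single b r) = single ⟨b, hN.le b.2⟩ r := by
  simp [faceInclusion]; rfl

theorem faceProjection_faceInclusion (hN : N.IsFaceOf M) (x : AddMonoidAlgebra R N) :
    faceProjection R hN (faceInclusion R hN x) = x := by
  induction x using induction_linear with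
  | zero => simp
  | add p q hp hq => simp only [map_add, hp, hq]
  | single b r => rw [faceInclusion_single, faceProjection_single_of_mem hN _ b.2]

end CommSemiring

section CommRing

variable [CommRing R]

variable (R) in
def faceIdeal (N M : AddSubmonoid G) : Ideal (AddMonoidAlgebra R M) :=
  Ideal.span {x | ∃ a : M, (a : G) ∉ N ∧ x = single a 1}

theorem sub_faceInclusion_faceProjection_mem (hN : N.IsFaceOf M) (x : AddMonoidAlgebra R M) :
    x - faceInclusion R hN (faceProjection R hN x) ∈ faceIdeal R N M := by
  induction x using induction_linear with
  | zero => simp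
  | add p q hp hq =>
    simpa only [map_add, add_sub_add_comm] using Ideal.add_mem _ hp hq
  | single a r =>
    by_cases h : (a : G) ∈ N
    · simp [faceProjection_single_of_mem hN a h, faceInclusion_single]
    · rw [faceProjection_single_of_not_mem hN a h, map_zero, sub_zero,
        ← mul_one r, ← smul_eq_mul, ← smul_single]
      exact Submodule.smul_of_tower_mem _ r (Ideal.subset_span ⟨a, h, rfl⟩)

theorem ker_faceProjection (hN : N.IsFaceOf M) :
    RingHom.ker (faceProjection R hN) = faceIdeal R N M := by
  refine le_antisymm (fun x hx => ?_) (Ideal.span_le.2 ?_)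
  · simpa [(RingHom.mem_ker).1 hx] using sub_faceInclusion_faceProjection_mem hN x
  · rintro _ ⟨a, ha, rfl⟩
    exact faceProjection_single_of_not_mem hN a ha 1

variable (R) in
def quotientFaceIdealAlgEquiv (hN : N.IsFaceOf M) :
    (AddMonoidAlgebra R M ⧸ faceIdeal R N M) ≃ₐ[R] AddMonoidAlgebra R N :=
  (Ideal.quotientEquivAlgOfEq R (ker_faceProjection hN).symm).trans
    (Ideal.quotientKerAlgEquivOfRightInverse (faceProjection_faceInclusion hN))

end CommRing

end AddMonoidAlgebra

open AddMonoidAlgebra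

theorem toR_add {m : ℕ} (a b : Fin m → ℤ) : toR (a + b) = toR a + toR b := by
  funext i
  simp [toR]

theorem toR_mem_coneM {m : ℕ} {M : AddSubmonoid (Fin m → ℤ)} {a : Fin m → ℤ} (ha : a ∈ M) :
    toR a ∈ coneM M :=
  ⟨1, fun _ => 1, fun _ => a, fun _ => zero_le_one, fun _ => ha, by simp⟩

theorem IsFace.left_mem_of_add_mem {m : ℕ} {M : AddSubmonoid (Fin m → ℤ)} {F : Set (Fin m → ℝ)}
    (hF : IsFace M F) {a b : Fin m → ℤ} (ha : a ∈ M) (hb : b ∈ M) (hab : toR (a + b) ∈ F) :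
    toR a ∈ F := by
  rcases hF with rfl | ⟨α, hα, rfl⟩
  · exact toR_mem_coneM ha
  · have hαa := hα _ (toR_mem_coneM ha)
    have hαb := hα _ (toR_mem_coneM hb)
    have hαab : α (toR a) + α (toR b) = 0 := by simpa [toR_add] using hab.2
    exact ⟨toR_mem_coneM ha, by linarith⟩

theorem IsFace.isFaceOf {m : ℕ} {M MF : AddSubmonoid (Fin m → ℤ)} {F : Set (Fin m → ℝ)}
    (hF : IsFace M F) (hMF : ∀ x, x ∈ MF ↔ x ∈ M ∧ toR x ∈ F) : MF.IsFaceOf M where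
  le x hx := ((hMF x).1 hx).1
  left_mem_of_add_mem a _ ha hb hab :=
    (hMF a).2 ⟨ha, hF.left_mem_of_add_mem ha hb ((hMF _).1 hab).2⟩

theorem pIdeal_eq_faceIdeal {m : ℕ} (K : Type*) [Field K] {M MF : AddSubmonoid (Fin m → ℤ)}
    {F : Set (Fin m → ℝ)} (hMF : ∀ x, x ∈ MF ↔ x ∈ M ∧ toR x ∈ F) :
    pIdeal K M F = faceIdeal K MF M := by
  simp [pIdeal, faceIdeal, hMF]

theorem quotient_by_face_ideal_general {m : ℕ} (K : Type*) [Field K]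
    (M : AddSubmonoid (Fin m → ℤ))
    (F : Set (Fin m → ℝ)) (hF : IsFace M F)
    (MF : AddSubmonoid (Fin m → ℤ))
    (hMF : ∀ x : Fin m → ℤ, x ∈ MF ↔ x ∈ M ∧ toR x ∈ F) :
    ∃ (π : AddMonoidAlgebra K ↥M →ₐ[K] AddMonoidAlgebra K ↥MF)
      (ι : AddMonoidAlgebra K ↥MF →ₐ[K] AddMonoidAlgebra K ↥M),
      (∀ (a : ↥M) (h : (a : Fin m → ℤ) ∈ MF),
        π (AddMonoidAlgebra.single a (1 : K)) =
          AddMonoidAlgebra.single (⟨(a : Fin m → ℤ), h⟩ : ↥MF) (1 : K)) ∧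
      (∀ a : ↥M, toR (a : Fin m → ℤ) ∉ F →
        π (AddMonoidAlgebra.single a (1 : K)) = 0) ∧
      (∀ b : ↥MF, ∃ hb : (b : Fin m → ℤ) ∈ M,
        ι (AddMonoidAlgebra.single b (1 : K)) =
          AddMonoidAlgebra.single (⟨(b : Fin m → ℤ), hb⟩ : ↥M) (1 : K)) ∧
      (∀ x, π (ι x) = x) ∧
      RingHom.ker (π : AddMonoidAlgebra K ↥M →+* AddMonoidAlgebra K ↥MF) = pIdeal K M F ∧
      Nonempty ((AddMonoidAlgebra K ↥M ⧸ pIdeal K M F) ≃ₐ[K] AddMonoidAlgebra K ↥MF) := by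
  have hN : MF.IsFaceOf M := hF.isFaceOf hMF
  rw [pIdeal_eq_faceIdeal K hMF]
  exact ⟨faceProjection K hN, faceInclusion K hN,
    fun a h => faceProjection_single_of_mem hN a h 1,
    fun a ha => faceProjection_single_of_not_mem hN a (fun h => ha ((hMF a).1 h).2) 1,
    fun b => ⟨hN.le b.2, faceInclusion_single hN b 1⟩,
    faceProjection_faceInclusion hN, ker_faceProjection hN, ⟨quotientFaceIdealAlgEquiv K hN⟩⟩

/-- For a face `F` of `cone(M)`, the face projection
`π : K[M] → K[M ∩ F]` (sending `X^a ↦ X^a` for `a ∈ F` and `X^a ↦ 0`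
otherwise) is a `K`-algebra homomorphism splitting the natural inclusion
`ι : K[M ∩ F] → K[M]`, with kernel `p_F`; hence `K[M]/p_F ≅ K[M ∩ F]`
as `K`-algebras. -/
theorem quotient_by_face_ideal {m : ℕ} (K : Type*) [Field K]
    (M : AddSubmonoid (Fin m → ℤ)) (hFG : M.FG)
    (F : Set (Fin m → ℝ)) (hF : IsFace M F)
    (MF : AddSubmonoid (Fin m → ℤ))
    (hMF : ∀ x : Fin m → ℤ, x ∈ MF ↔ x ∈ M ∧ toR x ∈ F) :
    ∃ (π : AddMonoidAlgebra K ↥M →ₐ[K] AddMonoidAlgebra K ↥MF)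
      (ι : AddMonoidAlgebra K ↥MF →ₐ[K] AddMonoidAlgebra K ↥M),
      (∀ (a : ↥M) (h : (a : Fin m → ℤ) ∈ MF),
        π (AddMonoidAlgebra.single a (1 : K)) =
          AddMonoidAlgebra.single (⟨(a : Fin m → ℤ), h⟩ : ↥MF) (1 : K)) ∧
      (∀ a : ↥M, toR (a : Fin m → ℤ) ∉ F →
        π (AddMonoidAlgebra.single a (1 : K)) = 0) ∧
      (∀ b : ↥MF, ∃ hb : (b : Fin m → ℤ) ∈ M,
        ι (AddMonoidAlgebra.single b (1 : K)) =
          AddMonoidAlgebra.single (⟨(b : Fin m → ℤ), hb⟩ : ↥M) (1 : K)) ∧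
      (∀ x, π (ι x) = x) ∧
      RingHom.ker (π : AddMonoidAlgebra K ↥M →+* AddMonoidAlgebra K ↥MF) = pIdeal K M F ∧
      Nonempty ((AddMonoidAlgebra K ↥M ⧸ pIdeal K M F) ≃ₐ[K] AddMonoidAlgebra K ↥MF) :=
  quotient_by_face_ideal_general K M F hF MF hMF
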